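/- The function g satisfies the one-sided (monotonicity) condition (y₂ − y₁)(g(y₂) − g(y₁)) ≤ (y₂ − y₁)² for all y₁, y₂ ∈ ℝ. -/

import Mathlib

open Real

/-- The partition points of Example 2.6: `t 0 = 0`,
`t (2ℓ+1) = t (2ℓ) + π/(ℓ+1)`, `t (2ℓ+2) = t (2ℓ+1) + π`. -/
noncomputable def tseq : ℕ → ℝ
  | 0 => 0
  | k + 1 => tseq k + (if k % 2 = 0 then Real.pi / ((k / 2 + 1 : ℕ) : ℝ) else Real.pi)

/-! The condition says that `y ↦ y - g y` is monotone. This function is monotone on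
`(-∞, 0]`, where `g = 1`; on `[t (2ℓ), t (2ℓ+1)]`, where `g` is a decreasing arc of a
cosine; and on `[t (2ℓ+1), t (2ℓ+2)]`, where `g` is a translate of the `1`-Lipschitz
cosine. Since `t` increases to `∞`, these pieces glue to a monotone function on `ℝ`. -/

section Gluing

variable {α β : Type*} [LinearOrder α] [Preorder β]

theorem monotoneOn_Iic_of_monotoneOn_Icc_succ {f : α → β} {t : ℕ → α} (ht : Monotone t)
    (h₀ : MonotoneOn f (Set.Iic (t 0)))
    (hsucc : ∀ k, MonotoneOn f (Set.Icc (t k) (t (k + 1)))) (k : ℕ) :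
    MonotoneOn f (Set.Iic (t k)) := by
  induction k with
  | zero => exact h₀
  | succ k ih =>
    rw [← Set.Iic_union_Icc_eq_Iic (ht k.le_succ)]
    exact ih.union_right (hsucc k) isGreatest_Iic (isLeast_Icc (ht k.le_succ))

theorem monotone_of_monotoneOn_Icc_succ {f : α → β} {t : ℕ → α} (ht : Monotone t)
    (ht_unbounded : ∀ y, ∃ k, y ≤ t k) (h₀ : MonotoneOn f (Set.Iic (t 0)))
    (hsucc : ∀ k, MonotoneOn f (Set.Icc (t k) (t (k + 1)))) :
    Monotone f := by
  intro y₁ y₂ hy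
  obtain ⟨k, hk⟩ := ht_unbounded y₂
  exact monotoneOn_Iic_of_monotoneOn_Icc_succ ht h₀ hsucc k (hy.trans hk) hk hy

end Gluing

theorem Set.EqOn.of_Ico_of_right {α β : Type*} [LinearOrder α] {f g : α → β} {a b : α}
    (h : Set.EqOn f g (Set.Ico a b)) (hb : f b = g b) : Set.EqOn f g (Set.Icc a b) := fun _ hy =>
  (eq_or_lt_of_le hy.2).elim (fun hyb => hyb ▸ hb) fun hyb => h ⟨hy.1, hyb⟩

theorem monotone_sub_cos_add (b : ℝ) : Monotone fun y => y - cos (y + b) := by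
  intro y₁ y₂ hy
  have hcos := (le_abs_self _).trans (abs_cos_sub_cos_le (y₂ + b) (y₁ + b))
  rw [show y₂ + b - (y₁ + b) = y₂ - y₁ by ring, abs_of_nonneg (sub_nonneg.2 hy)] at hcos
  dsimp only
  linarith

theorem monotoneOn_sub_cos_mul_sub {c : ℝ} (hc : 0 < c) (a : ℝ) :
    MonotoneOn (fun y => y - cos (c * (y - a))) (Set.Icc a (a + π / c)) := by
  have hmaps : Set.MapsTo (fun y => c * (y - a)) (Set.Icc a (a + π / c)) (Set.Icc 0 π) := by
    intro y ⟨hay, hya⟩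
    refine ⟨mul_nonneg hc.le (sub_nonneg.2 hay), ?_⟩
    calc c * (y - a) ≤ c * (π / c) := by gcongr; linarith
      _ = π := mul_div_cancel₀ π hc.ne'
  intro y₁ hy₁ y₂ hy₂ hy
  have hcos := antitoneOn_cos (hmaps hy₁) (hmaps hy₂) (by dsimp only; gcongr)
  dsimp only at hcos ⊢
  linarith

theorem tseq_two_mul_add_one (ℓ : ℕ) :
    tseq (2 * ℓ + 1) = tseq (2 * ℓ) + π / ((ℓ : ℝ) + 1) := by
  simp [tseq, Nat.mul_div_cancel_left ℓ two_pos]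

theorem tseq_two_mul_add_two (ℓ : ℕ) : tseq (2 * ℓ + 2) = tseq (2 * ℓ + 1) + π := by
  simp [tseq, Nat.add_mod]

theorem tseq_lt_succ (k : ℕ) : tseq k < tseq (k + 1) := by
  rw [tseq]
  have hstep : 0 < π / ((k / 2 + 1 : ℕ) : ℝ) := by positivity
  split_ifs <;> linarith [pi_pos]

theorem tseq_strictMono : StrictMono tseq := strictMono_nat_of_lt_succ tseq_lt_succ

theorem mul_pi_le_tseq_two_mul (k : ℕ) : k * π ≤ tseq (2 * k) := by
  induction k with
  | zero => simp [tseq]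
  | succ k ih =>
    rw [show 2 * (k + 1) = 2 * k + 2 by ring, tseq_two_mul_add_two, tseq_two_mul_add_one]
    push_cast
    linarith [div_nonneg pi_pos.le (by positivity : (0 : ℝ) ≤ (k : ℝ) + 1)]

theorem exists_le_tseq (y : ℝ) : ∃ k, y ≤ tseq k := by
  obtain ⟨k, hk⟩ := exists_nat_ge (y / π)
  exact ⟨2 * k, ((div_le_iff₀ pi_pos).1 hk).trans (mul_pi_le_tseq_two_mul k)⟩

section PiecewiseCosine

variable {g : ℝ → ℝ}
  (heven : ∀ ℓ : ℕ, Set.EqOn g (fun y => cos (((ℓ : ℝ) + 1) * (y - tseq (2 * ℓ))))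
    (Set.Ico (tseq (2 * ℓ)) (tseq (2 * ℓ + 1))))
  (hodd : ∀ ℓ : ℕ, Set.EqOn g (fun y => cos (y - tseq (2 * ℓ + 1) + π))
    (Set.Ico (tseq (2 * ℓ + 1)) (tseq (2 * ℓ + 2))))
include heven hodd

theorem eqOn_Icc_tseq_two_mul (ℓ : ℕ) :
    Set.EqOn g (fun y => cos (((ℓ : ℝ) + 1) * (y - tseq (2 * ℓ))))
      (Set.Icc (tseq (2 * ℓ)) (tseq (2 * ℓ + 1))) := by
  refine (heven ℓ).of_Ico_of_right ?_
  rw [hodd ℓ (Set.left_mem_Ico.2 (tseq_lt_succ _))]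
  dsimp only
  rw [sub_self, zero_add, tseq_two_mul_add_one, add_sub_cancel_left,
    mul_div_cancel₀ π (by positivity)]

theorem eqOn_Icc_tseq_two_mul_add_one (ℓ : ℕ) :
    Set.EqOn g (fun y => cos (y - tseq (2 * ℓ + 1) + π))
      (Set.Icc (tseq (2 * ℓ + 1)) (tseq (2 * ℓ + 2))) := by
  refine (hodd ℓ).of_Ico_of_right ?_
  have hstart := heven (ℓ + 1) (Set.left_mem_Ico.2 (tseq_lt_succ _))
  rw [show 2 * (ℓ + 1) = 2 * ℓ + 2 by ring] at hstart
  rw [hstart]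
  dsimp only
  rw [sub_self, mul_zero, cos_zero, tseq_two_mul_add_two, add_sub_cancel_left,
    ← two_mul, cos_two_pi]

end PiecewiseCosine

/-- The function `g` of Example 2.6 satisfies the one-sided (monotonicity) condition
`(y₂ - y₁)(g(y₂) - g(y₁)) ≤ (y₂ - y₁)²`. -/
theorem stmt_4 (g : ℝ → ℝ)
    (hneg : ∀ y : ℝ, y < 0 → g y = 1)
    (heven : ∀ (ℓ : ℕ), ∀ y ∈ Set.Ico (tseq (2 * ℓ)) (tseq (2 * ℓ + 1)),
      g y = Real.cos (((ℓ : ℝ) + 1) * (y - tseq (2 * ℓ))))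
    (hodd : ∀ (ℓ : ℕ), ∀ y ∈ Set.Ico (tseq (2 * ℓ + 1)) (tseq (2 * ℓ + 2)),
      g y = Real.cos (y - tseq (2 * ℓ + 1) + Real.pi)) :
    ∀ y₁ y₂ : ℝ, (y₂ - y₁) * (g y₂ - g y₁) ≤ (y₂ - y₁) ^ 2 := by
  have hconst : Set.EqOn g (fun _ => 1) (Set.Iic (tseq 0)) := fun y hy =>
    (eq_or_lt_of_le hy).elim
      (fun h => by simpa [h, tseq] using heven 0 0 (Set.left_mem_Ico.2 (tseq_lt_succ 0)))
      (hneg y)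
  have heven' := eqOn_Icc_tseq_two_mul heven hodd
  have hodd' := eqOn_Icc_tseq_two_mul_add_one heven hodd
  have hmono : Monotone fun y => y - g y := by
    refine monotone_of_monotoneOn_Icc_succ tseq_strictMono.monotone exists_le_tseq ?_ fun k => ?_
    · intro a ha b hb hab
      simp only [hconst ha, hconst hb]
      linarith
    obtain ⟨ℓ, rfl | rfl⟩ := Nat.even_or_odd' k
    · have hcos := monotoneOn_sub_cos_mul_sub (c := ℓ + 1) (by positivity) (tseq (2 * ℓ))
      rw [← tseq_two_mul_add_one] at hcos
      exact hcos.congr fun y hy => by simp [heven' ℓ hy]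
    · exact ((monotone_sub_cos_add (π - tseq (2 * ℓ + 1))).monotoneOn _).congr fun y hy => by
        simp only [hodd' ℓ hy]
        ring_nf
  intro y₁ y₂
  have hprod := (monotone_id.monovary hmono).sub_mul_sub_nonneg y₂ y₁
  simp only [id] at hprod
  nlinarith [hprod]
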